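/- Let q = (q_n)_{n=0}^∞ be a bounded sequence of positive integers with q₀ = 1, let c^{(n)} = (c^{(n)}_0,…,c^{(n)}_{q_n}) be channel numbers with sup_n ‖c^{(n)}‖_∞ < +∞, let f^{(n)} = (f^{(n)}_1,…,f^{(n)}_{q_n}) be filter-mask half-sizes with sup_n ‖f^{(n)}‖_∞ < +∞, let w^{(n)}_m = (w^{(n)}_{m,i,j})_{i,j} with w^{(n)}_{m,i,j} ∈ ℝ^{(2f^{(n)}_m+1)×(2f^{(n)}_m+1)} be the filter masks and b^{(n)}_m = (b^{(n)}_{m,1}E_d,…,b^{(n)}_{m,c^{(n)}_m}E_d) the bias tensors of the n-th residual block of a deep ResNet, with w^{(0)}_1 = w_s the sampling-layer mask, and let p ∈ [1,+∞]. For each n and m set N^{(n)}_m = (max_{1≤j≤c^{(n)}_{m−1}} ∑_{i=1}^{c^{(n)}_m} ∑_{i',j'} |w^{(n)}_{m,i,j,i',j'}|)^{1/p} (max_{1≤i≤c^{(n)}_m} ∑_{j=1}^{c^{(n)}_{m−1}} ∑_{i',j'} |w^{(n)}_{m,i,j,i',j'}|)^{1−1/p}. If ∑_{n=0}^∞ ∏_{m=1}^{q_n}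 N^{(n)}_m < +∞ and ∑_{n=0}^∞ ∑_{m=1}^{q_n} (∏_{m'=m+1}^{q_n} N^{(n)}_{m'}) (∑_{i=1}^{c^{(n)}_m} |b^{(n)}_{m,i}|^p)^{1/p} < +∞, then the ResNet (without the final linear output layer) converges pointwise on [0,1]^{d×d×c_in} as the number of residual blocks n tends to infinity. -/

import Mathlib

open Filter Matrix Topology
open scoped ENNReal

noncomputable section

/-- The ReLU activation applied componentwise. -/
def relu {d : ℕ} (x : Fin d → ℝ) : Fin d → ℝ := fun i => max (x i) 0

/-- Cast a vector along an equality of dimensions. -/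
def castVec {a b : ℕ} (h : a = b) (v : Fin a → ℝ) : Fin b → ℝ := fun i => v (Fin.cast h.symm i)

/-- Cast a matrix along equalities of its dimensions. -/
def mcast {a a' b b' : ℕ} (ha : a = a') (hb : b = b') (M : Matrix (Fin a) (Fin b) ℝ) :
    Matrix (Fin a') (Fin b') ℝ :=
  M.submatrix (Fin.cast ha.symm) (Fin.cast hb.symm)

/-- Outputs of consecutive fully connected ReLU layers:
`hiddenSeq c W b m x = (σ(W m ⬝ · + b m) ∘ ⋯ ∘ σ(W 1 ⬝ · + b 1)) x` (0-based weight indices). -/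
def hiddenSeq (c : ℕ → ℕ) (W : ∀ m, Matrix (Fin (c (m+1))) (Fin (c m)) ℝ)
    (b : ∀ m, Fin (c (m+1)) → ℝ) : (m : ℕ) → (Fin (c 0) → ℝ) → Fin (c m) → ℝ
  | 0 => fun x => x
  | m+1 => fun x => relu ((W m).mulVec (hiddenSeq c W b m x) + b m)

/-- A residual block with `q` layers (`q ≥ 1`), shortcut connection added before the last ReLU. -/
def resBlock (d q : ℕ) (hq : 0 < q) (c : ℕ → ℕ) (hc0 : c 0 = d) (hcq : c q = d)
    (W : ∀ m, Matrix (Fin (c (m+1))) (Fin (c m)) ℝ)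
    (b : ∀ m, Fin (c (m+1)) → ℝ) (x : Fin d → ℝ) : Fin d → ℝ :=
  castVec (show c (q-1+1) = d from (congrArg c (Nat.succ_pred_eq_of_pos hq)).trans hcq)
    (relu ((W (q-1)).mulVec (hiddenSeq c W b (q-1) (castVec hc0.symm x))
      + castVec (show c (q-1+1) = d from
          (congrArg c (Nat.succ_pred_eq_of_pos hq)).trans hcq).symm x + b (q-1)))

/-- The deep network with shortcut connections: composition of residual blocks `0,…,n`. -/
def resNet (d : ℕ) (q : ℕ → ℕ) (hq : ∀ n, 0 < q n) (c : ℕ → ℕ → ℕ)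
    (hc0 : ∀ n, c n 0 = d) (hcq : ∀ n, c n (q n) = d)
    (W : ∀ n m, Matrix (Fin (c n (m+1))) (Fin (c n m)) ℝ)
    (b : ∀ n m, Fin (c n (m+1)) → ℝ) :
    ℕ → (Fin d → ℝ) → Fin d → ℝ
  | 0 => resBlock d (q 0) (hq 0) (c 0) (hc0 0) (hcq 0) (W 0) (b 0)
  | n+1 => fun x => resBlock d (q (n+1)) (hq (n+1)) (c (n+1)) (hc0 (n+1)) (hcq (n+1))
      (W (n+1)) (b (n+1)) (resNet d q hq c hc0 hcq W b n x)

/-- `J` is a 0/1 diagonal (activation) matrix. -/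
def IsActivation {a : ℕ} (J : Matrix (Fin a) (Fin a) ℝ) : Prop :=
  (∀ i, J i i = 0 ∨ J i i = 1) ∧ ∀ i j, i ≠ j → J i j = 0

/-- The pre-activation vector `z` has exactly the sign pattern prescribed by the
activation matrix `J`: positive on the support of `J` and `≤ 0` off it. -/
def inPattern {a : ℕ} (J : Matrix (Fin a) (Fin a) ℝ) (z : Fin a → ℝ) : Prop :=
  ∀ i, J i i = 1 ↔ 0 < z i

/-- `x` lies in the activation domain of a single residual block w.r.t. `J`. -/
def blockDomain (d q : ℕ) (hq : 0 < q) (c : ℕ → ℕ) (hc0 : c 0 = d) (hcq : c q = d)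
    (W : ∀ m, Matrix (Fin (c (m+1))) (Fin (c m)) ℝ)
    (b : ∀ m, Fin (c (m+1)) → ℝ)
    (J : ∀ m, Matrix (Fin (c (m+1))) (Fin (c (m+1))) ℝ) (x : Fin d → ℝ) : Prop :=
  (∀ m, m + 1 < q →
    inPattern (J m) ((W m).mulVec (hiddenSeq c W b m (castVec hc0.symm x)) + b m)) ∧
  inPattern (J (q-1)) ((W (q-1)).mulVec (hiddenSeq c W b (q-1) (castVec hc0.symm x))
    + castVec (show c (q-1+1) = d from
        (congrArg c (Nat.succ_pred_eq_of_pos hq)).trans hcq).symm x + b (q-1))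

/-- The input fed to block `k` (output of the previous blocks; the input itself when `k = 0`). -/
def netInput (d : ℕ) (q : ℕ → ℕ) (hq : ∀ n, 0 < q n) (c : ℕ → ℕ → ℕ)
    (hc0 : ∀ n, c n 0 = d) (hcq : ∀ n, c n (q n) = d)
    (W : ∀ n m, Matrix (Fin (c n (m+1))) (Fin (c n m)) ℝ)
    (b : ∀ n m, Fin (c n (m+1)) → ℝ) :
    ℕ → (Fin d → ℝ) → Fin d → ℝ
  | 0 => fun x => x
  | k+1 => resNet d q hq c hc0 hcq W b k

/-- Activation domain of the multi-residual-block network `𝒩_{c,q,n}` w.r.t. `J`: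
`x ∈ [0,1]^d` and at each layer of each block the pre-activation has the pattern of `J`. -/
def InActDomain (d : ℕ) (q : ℕ → ℕ) (hq : ∀ n, 0 < q n) (c : ℕ → ℕ → ℕ)
    (hc0 : ∀ n, c n 0 = d) (hcq : ∀ n, c n (q n) = d)
    (W : ∀ n m, Matrix (Fin (c n (m+1))) (Fin (c n m)) ℝ)
    (b : ∀ n m, Fin (c n (m+1)) → ℝ)
    (J : ∀ n m, Matrix (Fin (c n (m+1))) (Fin (c n (m+1))) ℝ)
    (n : ℕ) (x : Fin d → ℝ) : Prop :=
  (∀ i, x i ∈ Set.Icc (0:ℝ) 1) ∧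
  ∀ k ≤ n, blockDomain d (q k) (hq k) (c k) (hc0 k) (hcq k) (W k) (b k) (J k)
    (netInput d q hq c hc0 hcq W b k x)

/-- `prodSeg f a n = f n * f (n-1) * ⋯ * f a` (the identity when `n < a`). -/
def prodSeg {α : Type*} [Monoid α] (f : ℕ → α) (a n : ℕ) : α :=
  ((List.range' a (n + 1 - a)).reverse.map f).prod

/-- `innerProdFrom c W J a m = (J (a+m) W (a+m)) ⋯ (J (a+1) W (a+1)) (J a W a)`,
i.e. the product `∏_{m'=a+1}^{a+m} J_{m'} W_{m'}` in the 1-based indexing of the paper. -/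
def innerProdFrom (c : ℕ → ℕ) (W : ∀ m, Matrix (Fin (c (m+1))) (Fin (c m)) ℝ)
    (J : ∀ m, Matrix (Fin (c (m+1))) (Fin (c (m+1))) ℝ) (a : ℕ) :
    (m : ℕ) → Matrix (Fin (c (a + m))) (Fin (c a)) ℝ
  | 0 => (1 : Matrix (Fin (c a)) (Fin (c a)) ℝ)
  | m+1 => (J (a + m) * W (a + m)) * innerProdFrom c W J a m

/-- The matrix `∏_{m=1}^{q} J_m W_m + J_q` of a residual block. -/
def blockMat (d q : ℕ) (hq : 0 < q) (c : ℕ → ℕ) (hc0 : c 0 = d) (hcq : c q = d)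
    (W : ∀ m, Matrix (Fin (c (m+1))) (Fin (c m)) ℝ)
    (J : ∀ m, Matrix (Fin (c (m+1))) (Fin (c (m+1))) ℝ) :
    Matrix (Fin d) (Fin d) ℝ :=
  mcast ((congrArg c (Nat.zero_add q)).trans hcq) hc0 (innerProdFrom c W J 0 q)
    + mcast (show c (q-1+1) = d from (congrArg c (Nat.succ_pred_eq_of_pos hq)).trans hcq)
        (show c (q-1+1) = d from (congrArg c (Nat.succ_pred_eq_of_pos hq)).trans hcq) (J (q-1))

/-- `Aseq n = ∏_{k=0}^{n} (∏_{m=1}^{q_k} J^{(k)}_m W^{(k)}_m + J^{(k)}_{q_k})`. -/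
def Aseq (d : ℕ) (q : ℕ → ℕ) (hq : ∀ n, 0 < q n) (c : ℕ → ℕ → ℕ)
    (hc0 : ∀ n, c n 0 = d) (hcq : ∀ n, c n (q n) = d)
    (W : ∀ n m, Matrix (Fin (c n (m+1))) (Fin (c n m)) ℝ)
    (J : ∀ n m, Matrix (Fin (c n (m+1))) (Fin (c n (m+1))) ℝ) (n : ℕ) :
    Matrix (Fin d) (Fin d) ℝ :=
  prodSeg (fun k => blockMat d (q k) (hq k) (c k) (hc0 k) (hcq k) (W k) (J k)) 0 n

/-- `∑_{m=1}^{q} (∏_{m'=m+1}^{q} J_{m'} W_{m'}) J_m b_m` for one residual block. -/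
def blockBias (d q : ℕ) (c : ℕ → ℕ) (hcq : c q = d)
    (W : ∀ m, Matrix (Fin (c (m+1))) (Fin (c m)) ℝ)
    (b : ∀ m, Fin (c (m+1)) → ℝ)
    (J : ∀ m, Matrix (Fin (c (m+1))) (Fin (c (m+1))) ℝ) : Fin d → ℝ :=
  ∑ m ∈ (Finset.range q).attach,
    (mcast ((congrArg c (Nat.add_sub_cancel' (Finset.mem_range.mp m.2))).trans hcq) rfl
        (innerProdFrom c W J (m.1+1) (q - (m.1+1)))).mulVec ((J m.1).mulVec (b m.1))

/-- `Bseq n = ∑_{k=0}^{n} ∑_{m=1}^{q_k} [∏_{k'=k+1}^{n} (∏_{m'} J W + J)] (∏_{m'>m} J W) J_m b_m`. -/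
def Bseq (d : ℕ) (q : ℕ → ℕ) (hq : ∀ n, 0 < q n) (c : ℕ → ℕ → ℕ)
    (hc0 : ∀ n, c n 0 = d) (hcq : ∀ n, c n (q n) = d)
    (W : ∀ n m, Matrix (Fin (c n (m+1))) (Fin (c n m)) ℝ)
    (b : ∀ n m, Fin (c n (m+1)) → ℝ)
    (J : ∀ n m, Matrix (Fin (c n (m+1))) (Fin (c n (m+1))) ℝ) (n : ℕ) : Fin d → ℝ :=
  ∑ k ∈ Finset.range (n+1),
    (prodSeg (fun k' => blockMat d (q k') (hq k') (c k') (hc0 k') (hcq k') (W k') (J k'))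
        (k+1) n).mulVec
      (blockBias d (q k) (c k) (hcq k) (W k) (b k) (J k))

/-- A family of norms on the spaces `ℝ^m` which is monotone in the sense of the paper. -/
structure NormFamily where
  N : ∀ m : ℕ, (Fin m → ℝ) → ℝ
  eq_zero_iff : ∀ (m : ℕ) (x : Fin m → ℝ), N m x = 0 ↔ x = 0
  add_le : ∀ (m : ℕ) (x y : Fin m → ℝ), N m (x + y) ≤ N m x + N m y
  smul_eq : ∀ (m : ℕ) (r : ℝ) (x : Fin m → ℝ), N m (r • x) = |r| * N m x
  mono : ∀ (m : ℕ) (x y : Fin m → ℝ), (∀ i, |x i| ≤ |y i|) → N m x ≤ N m y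

/-- The operator (matrix) norm induced by a family of vector norms. -/
def NormFamily.op (F : NormFamily) {a b : ℕ} (M : Matrix (Fin a) (Fin b) ℝ) : ℝ :=
  sSup ((fun x => F.N a (M.mulVec x) / F.N b x) '' {x : Fin b → ℝ | x ≠ 0})

/-- 1-D Toeplitz convolution-with-zero-padding matrix of a filter mask `u ∈ ℝ^{2f+1}`:
`(T1 f d u) a b = u (f - b + a)` when `-f ≤ b - a ≤ f` and `0` otherwise. -/
def T1 (f d : ℕ) (u : Fin (2*f+1) → ℝ) : Matrix (Fin d) (Fin d) ℝ :=
  fun a b =>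
    if h : -(f:ℤ) ≤ ((b:ℕ):ℤ) - ((a:ℕ):ℤ) ∧ ((b:ℕ):ℤ) - ((a:ℕ):ℤ) ≤ (f:ℤ) then
      u ⟨((f:ℤ) - ((b:ℕ):ℤ) + ((a:ℕ):ℤ)).toNat, by omega⟩
    else 0

/-- 2-D block Toeplitz convolution matrix of a mask `v ∈ ℝ^{(2f+1)×(2f+1)}`:
the `(a,b)` block is `T1 f d (v (f - b + a))` when `-f ≤ b - a ≤ f` and `0` otherwise. -/
def T2 (f d : ℕ) (v : Fin (2*f+1) → Fin (2*f+1) → ℝ) :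
    Matrix (Fin d × Fin d) (Fin d × Fin d) ℝ :=
  fun P Q =>
    if h : -(f:ℤ) ≤ ((Q.1:ℕ):ℤ) - ((P.1:ℕ):ℤ) ∧ ((Q.1:ℕ):ℤ) - ((P.1:ℕ):ℤ) ≤ (f:ℤ) then
      T1 f d (v ⟨((f:ℤ) - ((Q.1:ℕ):ℤ) + ((P.1:ℕ):ℤ)).toNat, by omega⟩) P.2 Q.2
    else 0

/-- The block matrix `T(w)` of a multi-channel convolution
with `cin` input channels and `cout` output channels: the `(i,j)` block is `T2 f d (w i j)`. -/
def Tmulti (f d cin cout : ℕ)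
    (w : Fin cout → Fin cin → Fin (2*f+1) → Fin (2*f+1) → ℝ) :
    Matrix (Fin cout × Fin d × Fin d) (Fin cin × Fin d × Fin d) ℝ :=
  fun P Q => T2 f d (w P.1 Q.1) P.2 Q.2

/-- Multi-channel 2-D convolution with zero padding, as matrix-vector multiplication
by the Toeplitz-type matrices `T2`. -/
def convLayer (f d cin cout : ℕ)
    (w : Fin cout → Fin cin → Fin (2*f+1) → Fin (2*f+1) → ℝ)
    (x : Fin cin → Fin d → Fin d → ℝ) : Fin cout → Fin d → Fin d → ℝ :=
  fun i a b => ∑ j, ∑ s, ∑ t, T2 f d (w i j) (a, b) (s, t) * x j s t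

/-- Cast the channel index of a tensor along an equality of channel numbers. -/
def castChan {d a b : ℕ} (h : a = b) (x : Fin a → Fin d → Fin d → ℝ) :
    Fin b → Fin d → Fin d → ℝ :=
  fun i => x (Fin.cast h.symm i)

/-- Hidden layers of a convolutional residual block (with constant-per-channel biases `β`). -/
def convHidden (d : ℕ) (c : ℕ → ℕ) (f : ℕ → ℕ)
    (w : ∀ m, Fin (c (m+1)) → Fin (c m) → Fin (2 * f m + 1) → Fin (2 * f m + 1) → ℝ)
    (β : ∀ m, Fin (c (m+1)) → ℝ) :
    (m : ℕ) → (Fin (c 0) → Fin d → Fin d → ℝ) → Fin (c m) → Fin d → Fin d → ℝ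
  | 0 => fun x => x
  | m+1 => fun x i a b =>
      max (convLayer (f m) d (c m) (c (m+1)) (w m) (convHidden d c f w β m x) i a b + β m i) 0

/-- A convolutional residual block with `Q ≥ 1` convolutional layers and a shortcut connection. -/
def convBlock (d Q : ℕ) (hQ : 0 < Q) (cres : ℕ) (c : ℕ → ℕ)
    (hc0 : c 0 = cres) (hcq : c Q = cres) (f : ℕ → ℕ)
    (w : ∀ m, Fin (c (m+1)) → Fin (c m) → Fin (2 * f m + 1) → Fin (2 * f m + 1) → ℝ)
    (β : ∀ m, Fin (c (m+1)) → ℝ)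
    (x : Fin cres → Fin d → Fin d → ℝ) : Fin cres → Fin d → Fin d → ℝ :=
  castChan (show c (Q-1+1) = cres from (congrArg c (Nat.succ_pred_eq_of_pos hQ)).trans hcq)
    (fun i a b =>
      max (convLayer (f (Q-1)) d (c (Q-1)) (c (Q-1+1)) (w (Q-1))
            (convHidden d c f w β (Q-1) (castChan hc0.symm x)) i a b
          + x (Fin.cast (show c (Q-1+1) = cres from
              (congrArg c (Nat.succ_pred_eq_of_pos hQ)).trans hcq) i) a b
          + β (Q-1) i) 0)

/-- The deep convolutional ResNet without the output layer: sampling layer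
`σ(x ∗ w_s + b_s)` (block `0`) followed by the convolutional residual blocks `1,…,n`. -/
def convNet (d cin cres : ℕ) (q : ℕ → ℕ) (hq : ∀ n, 0 < q n)
    (c : ℕ → ℕ → ℕ) (hc00 : c 0 0 = cin) (h01 : c 0 1 = cres)
    (hc0 : ∀ n, 0 < n → c n 0 = cres) (hcq : ∀ n, 0 < n → c n (q n) = cres)
    (f : ℕ → ℕ → ℕ)
    (w : ∀ n m, Fin (c n (m+1)) → Fin (c n m) → Fin (2 * f n m + 1) → Fin (2 * f n m + 1) → ℝ)
    (β : ∀ n m, Fin (c n (m+1)) → ℝ) :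
    ℕ → (Fin cin → Fin d → Fin d → ℝ) → Fin cres → Fin d → Fin d → ℝ
  | 0 => fun x => castChan h01 (fun i a b =>
      max (convLayer (f 0 0) d (c 0 0) (c 0 1) (w 0 0) (castChan hc00.symm x) i a b + β 0 0 i) 0)
  | n+1 => fun x =>
      convBlock d (q (n+1)) (hq (n+1)) cres (c (n+1)) (hc0 (n+1) (Nat.succ_pos n))
        (hcq (n+1) (Nat.succ_pos n)) (f (n+1)) (w (n+1)) (β (n+1))
        (convNet d cin cres q hq c hc00 h01 hc0 hcq f w β n x)

/-- The ℓ_p norm of a vector, `p ∈ [1,∞]`. -/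
def lpNorm (p : ℝ≥0∞) {ι : Type*} [Fintype ι] (x : ι → ℝ) : ℝ :=
  if p = ∞ then ⨆ i, |x i| else (∑ i, |x i| ^ p.toReal) ^ (1 / p.toReal)

/-- The matrix (operator) norm induced by the ℓ_p vector norms. -/
def opNormP (p : ℝ≥0∞) {α β : Type*} [Fintype α] [Fintype β] (M : Matrix α β ℝ) : ℝ :=
  sSup ((fun x => lpNorm p (M.mulVec x) / lpNorm p x) '' {x : β → ℝ | x ≠ 0})

/-- Maximum absolute column sum of a matrix (the operator norm induced by ℓ₁). -/
def maxColSum {α β : Type*} [Fintype α] [Fintype β] (M : Matrix α β ℝ) : ℝ :=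
  ⨆ j, ∑ i, |M i j|

/-- Maximum absolute row sum of a matrix (the operator norm induced by ℓ_∞). -/
def maxRowSum {α β : Type*} [Fintype α] [Fintype β] (M : Matrix α β ℝ) : ℝ :=
  ⨆ i, ∑ j, |M i j|

/-- The block matrix with blocks `A i j ∈ ℝ^{r×c}`, `i < N`, `j < M`. -/
def blockMatrixOf {N M r c : ℕ} (A : Fin N → Fin M → Matrix (Fin r) (Fin c) ℝ) :
    Matrix (Fin N × Fin r) (Fin M × Fin c) ℝ :=
  fun p q => A p.1 q.1 p.2 q.2

/-- The factor `N^{(n)}_m` of Theorem 5.2: the bound of Lemma 5.1 on `‖T(w)‖_p`. -/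
def Nfactor (p : ℝ≥0∞) {f cin cout : ℕ}
    (w : Fin cout → Fin cin → Fin (2*f+1) → Fin (2*f+1) → ℝ) : ℝ :=
  (⨆ j : Fin cin, ∑ i, ∑ i', ∑ j', |w i j i' j'|) ^ ((1/p).toReal)
    * (⨆ i : Fin cout, ∑ j, ∑ i', ∑ j', |w i j i' j'|) ^ (1 - (1/p).toReal)

/-- Zero padding of a vector `x ∈ ℝ^{din}` to a vector `(x, 0) ∈ ℝ^{d}`. -/
def padVec (din d : ℕ) (x : Fin din → ℝ) : Fin d → ℝ :=
  fun i => if h : (i : ℕ) < din then x ⟨i, h⟩ else 0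

/-- The matrix `[Ws  0] ∈ ℝ^{d × d}` obtained by padding `Ws ∈ ℝ^{d × din}` with zero columns. -/
def padMat (din d : ℕ) (Ws : Matrix (Fin d) (Fin din) ℝ) : Matrix (Fin d) (Fin d) ℝ :=
  fun i j => if h : (j : ℕ) < din then Ws i ⟨j, h⟩ else 0

/-!
Write `z n` for the output of the first `n + 1` blocks, vectorized and measured in `ℓ_p`.
By the Schur test, a convolution matrix `T(w)` has `ℓ_p` operator norm at most `Nfactor p w`,
since each row and column of a Toeplitz block contains every mask entry at most once.
The ReLU is a contraction and fixes the nonnegative input of a block, so unrolling block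
`n + 1` gives `‖z (n+1) - z n‖ ≤ A (n+1) * ‖z n‖ + K * B (n+1)`, where `A`, `B` are the two
summable series of the hypotheses and `K = (d²)^(1/p)` comes from biases being constant on
each channel. A discrete Grönwall argument bounds `‖z n‖` by
`(‖z 0‖ + K ∑ B) * exp (∑ A)`, so the increments are summable and `z` is Cauchy.
-/

open Finset

section LpNorm

variable {ι κ : Type*} [Fintype ι] [Fintype κ] {p : ℝ≥0∞}

theorem lpNorm_eq_norm_toLp (hp : p ≠ 0) (x : ι → ℝ) : lpNorm p x = ‖WithLp.toLp p x‖ := by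
  by_cases htop : p = ∞
  · subst htop
    simp [lpNorm, PiLp.norm_eq_ciSup]
  · simp [lpNorm, htop, PiLp.norm_eq_sum (ENNReal.toReal_pos hp htop)]

theorem lpNorm_nonneg (x : ι → ℝ) : 0 ≤ lpNorm p x := by
  unfold lpNorm
  split_ifs
  · exact Real.iSup_nonneg fun _ => abs_nonneg _
  · positivity

theorem lpNorm_add_le (hp : 1 ≤ p) (x y : ι → ℝ) :
    lpNorm p (x + y) ≤ lpNorm p x + lpNorm p y := by
  have : Fact (1 ≤ p) := ⟨hp⟩
  have hp0 : p ≠ 0 := (zero_lt_one.trans_le hp).ne'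
  simpa only [lpNorm_eq_norm_toLp hp0, WithLp.toLp_add] using norm_add_le _ _

theorem abs_le_lpNorm (hp : 1 ≤ p) (x : ι → ℝ) (i : ι) : |x i| ≤ lpNorm p x := by
  have : Fact (1 ≤ p) := ⟨hp⟩
  simpa [lpNorm_eq_norm_toLp (zero_lt_one.trans_le hp).ne'] using
    PiLp.norm_apply_le (WithLp.toLp p x) i

theorem lpNorm_mono {x y : ι → ℝ} (h : ∀ i, |x i| ≤ |y i|) : lpNorm p x ≤ lpNorm p y := by
  unfold lpNorm
  split_ifs
  · exact ciSup_mono (Finite.bddAbove_range _) h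
  · refine Real.rpow_le_rpow (by positivity) (sum_le_sum fun i _ => ?_) (by positivity)
    exact Real.rpow_le_rpow (abs_nonneg _) (h i) ENNReal.toReal_nonneg

theorem lpNorm_comp_fst_le (v : ι → ℝ) :
    lpNorm p (fun t : ι × κ => v t.1) ≤ (Fintype.card κ : ℝ) ^ (1 / p).toReal * lpNorm p v := by
  unfold lpNorm
  split_ifs with hp
  · subst hp
    simp only [ENNReal.div_top, ENNReal.toReal_zero, Real.rpow_zero, one_mul]
    refine Real.iSup_le (fun t => le_ciSup (f := fun i => |v i|) (Finite.bddAbove_range _) t.1) ?_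
    exact Real.iSup_nonneg fun _ => abs_nonneg _
  · rw [Fintype.sum_prod_type, sum_comm]
    simp only [sum_const, card_univ, nsmul_eq_mul]
    rw [Real.mul_rpow (by positivity) (by positivity), one_div p, ENNReal.toReal_inv, one_div]

end LpNorm

theorem Real.sum_mul_rpow_le {ι : Type*} (s : Finset ι) {r : ℝ} (hr : 1 ≤ r) (w f : ι → ℝ)
    (hw : ∀ i, 0 ≤ w i) (hf : ∀ i, 0 ≤ f i) :
    (∑ i ∈ s, w i * f i) ^ r ≤ (∑ i ∈ s, w i) ^ (r - 1) * ∑ i ∈ s, w i * f i ^ r := by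
  have hr0 : 0 < r := zero_lt_one.trans_le hr
  have hW : 0 ≤ ∑ i ∈ s, w i := sum_nonneg fun i _ => hw i
  have hWf : 0 ≤ ∑ i ∈ s, w i * f i ^ r :=
    sum_nonneg fun i _ => mul_nonneg (hw i) (Real.rpow_nonneg (hf i) _)
  calc (∑ i ∈ s, w i * f i) ^ r
      ≤ ((∑ i ∈ s, w i) ^ (1 - r⁻¹) * (∑ i ∈ s, w i * f i ^ r) ^ r⁻¹) ^ r := by
        gcongr
        · exact sum_nonneg fun i _ => mul_nonneg (hw i) (hf i)
        · exact Real.inner_le_weight_mul_Lp_of_nonneg s hr w f hw hf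
    _ = (∑ i ∈ s, w i) ^ (r - 1) * ∑ i ∈ s, w i * f i ^ r := by
        rw [Real.mul_rpow (by positivity) (by positivity), ← Real.rpow_mul hW, ← Real.rpow_mul hWf,
          inv_mul_cancel₀ hr0.ne', Real.rpow_one, sub_mul, one_mul, inv_mul_cancel₀ hr0.ne']

theorem abs_mulVec_le {ι κ : Type*} [Fintype κ] (M : Matrix ι κ ℝ) (x : κ → ℝ) (i : ι) :
    |(M *ᵥ x) i| ≤ ∑ j, |M i j| * |x j| := by
  simpa only [Matrix.mulVec, dotProduct, abs_mul] using
    abs_sum_le_sum_abs (fun j => M i j * x j) univ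

section Schur

variable {ι κ : Type*} [Fintype ι] [Fintype κ] {p : ℝ≥0∞}

theorem maxColSum_nonneg (M : Matrix ι κ ℝ) : 0 ≤ maxColSum M :=
  Real.iSup_nonneg fun _ => sum_nonneg fun _ _ => abs_nonneg _

theorem maxRowSum_nonneg (M : Matrix ι κ ℝ) : 0 ≤ maxRowSum M :=
  Real.iSup_nonneg fun _ => sum_nonneg fun _ _ => abs_nonneg _

theorem sum_abs_le_maxColSum (M : Matrix ι κ ℝ) (j : κ) : ∑ i, |M i j| ≤ maxColSum M :=
  le_ciSup (f := fun j => ∑ i, |M i j|) (Finite.bddAbove_range _) j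

theorem sum_abs_le_maxRowSum (M : Matrix ι κ ℝ) (i : ι) : ∑ j, |M i j| ≤ maxRowSum M :=
  le_ciSup (f := fun i => ∑ j, |M i j|) (Finite.bddAbove_range _) i

theorem abs_mulVec_le_maxRowSum_mul (hp : 1 ≤ p) (M : Matrix ι κ ℝ) (x : κ → ℝ) (i : ι) :
    |(M *ᵥ x) i| ≤ maxRowSum M * lpNorm p x := calc
  |(M *ᵥ x) i| ≤ ∑ j, |M i j| * |x j| := abs_mulVec_le M x i
  _ ≤ ∑ j, |M i j| * lpNorm p x := by
    gcongr with j
    exact abs_le_lpNorm hp x j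
  _ ≤ maxRowSum M * lpNorm p x := by
    rw [← sum_mul]
    exact mul_le_mul_of_nonneg_right (sum_abs_le_maxRowSum M i) (lpNorm_nonneg x)

theorem sum_abs_mulVec_rpow_le {r : ℝ} (hr : 1 ≤ r) (M : Matrix ι κ ℝ) (x : κ → ℝ) :
    ∑ i, |(M *ᵥ x) i| ^ r ≤ maxRowSum M ^ (r - 1) * maxColSum M * ∑ j, |x j| ^ r := by
  have hR := maxRowSum_nonneg M
  have hrow : ∀ i, |(M *ᵥ x) i| ^ r ≤ maxRowSum M ^ (r - 1) * ∑ j, |M i j| * |x j| ^ r :=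
    fun i => calc
      |(M *ᵥ x) i| ^ r ≤ (∑ j, |M i j| * |x j|) ^ r := by
        gcongr
        exact abs_mulVec_le M x i
      _ ≤ (∑ j, |M i j|) ^ (r - 1) * ∑ j, |M i j| * |x j| ^ r :=
        Real.sum_mul_rpow_le _ hr _ _ (fun _ => abs_nonneg _) (fun _ => abs_nonneg _)
      _ ≤ maxRowSum M ^ (r - 1) * ∑ j, |M i j| * |x j| ^ r := by
        gcongr
        exact sum_abs_le_maxRowSum M i
  calc ∑ i, |(M *ᵥ x) i| ^ r ≤ ∑ i, maxRowSum M ^ (r - 1) * ∑ j, |M i j| * |x j| ^ r :=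
        sum_le_sum fun i _ => hrow i
    _ = maxRowSum M ^ (r - 1) * ∑ j, (∑ i, |M i j|) * |x j| ^ r := by
        rw [← mul_sum, sum_comm]
        simp only [sum_mul]
    _ ≤ maxRowSum M ^ (r - 1) * ∑ j, maxColSum M * |x j| ^ r := by
        gcongr with j
        exact sum_abs_le_maxColSum M j
    _ = maxRowSum M ^ (r - 1) * maxColSum M * ∑ j, |x j| ^ r := by
        rw [← mul_sum, mul_assoc]

/-- The Schur test. -/
theorem lpNorm_mulVec_le (hp : 1 ≤ p) (M : Matrix ι κ ℝ) (x : κ → ℝ) :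
    lpNorm p (M *ᵥ x)
      ≤ maxColSum M ^ (1 / p).toReal * maxRowSum M ^ (1 - (1 / p).toReal) * lpNorm p x := by
  have hC := maxColSum_nonneg M
  have hR := maxRowSum_nonneg M
  by_cases htop : p = ∞
  · subst htop
    simp only [ENNReal.div_top, ENNReal.toReal_zero, Real.rpow_zero, one_mul, sub_zero,
      Real.rpow_one]
    simpa only [lpNorm, if_pos] using
      Real.iSup_le (abs_mulVec_le_maxRowSum_mul hp M x) (mul_nonneg hR (lpNorm_nonneg x))
  · set r := p.toReal
    have hr : 1 ≤ r := by simpa using ENNReal.toReal_mono htop hp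
    have hexp : (1 / p).toReal = 1 / r := by rw [one_div p, ENNReal.toReal_inv, one_div]
    simp only [lpNorm, if_neg htop, hexp]
    calc (∑ i, |(M *ᵥ x) i| ^ r) ^ (1 / r)
        ≤ (maxRowSum M ^ (r - 1) * maxColSum M * ∑ j, |x j| ^ r) ^ (1 / r) := by
          gcongr
          exact sum_abs_mulVec_rpow_le hr M x
      _ = maxColSum M ^ (1 / r) * maxRowSum M ^ (1 - 1 / r) * (∑ j, |x j| ^ r) ^ (1 / r) := by
        rw [Real.mul_rpow (by positivity) (by positivity),
          Real.mul_rpow (by positivity) hC, ← Real.rpow_mul hR, sub_mul,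
          one_mul, mul_one_div_cancel (zero_lt_one.trans_le hr).ne']
        ring

end Schur

theorem sum_dite_le_of_injective {ι κ : Type*} [Fintype ι] [Fintype κ] {P : ι → Prop}
    [DecidablePred P] (e : ∀ i, P i → κ) (he : ∀ i j hi hj, e i hi = e j hj → i = j)
    {g : κ → ℝ} (hg : ∀ k, 0 ≤ g k) :
    ∑ i, (if h : P i then g (e i h) else 0) ≤ ∑ k, g k := by
  let e' : {i // P i} ↪ κ := ⟨fun i => e i i.2, fun i j hij => Subtype.ext (he _ _ _ _ hij)⟩
  rw [← Fintype.sum_subtype_add_sum_subtype P]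
  have hP : ∑ i : {i // P i}, (if h : P i then g (e i h) else 0) = ∑ i : {i // P i}, g (e i i.2) :=
    sum_congr rfl fun i _ => dif_pos i.2
  have hnP : ∑ i : {i // ¬P i}, (if h : P i then g (e i h) else 0) = 0 :=
    sum_eq_zero fun i _ => dif_neg i.2
  rw [hP, hnP, add_zero]
  calc ∑ i : {i // P i}, g (e i i.2) = ∑ k ∈ univ.map e', g k := (sum_map univ e' g).symm
    _ ≤ ∑ k, g k := sum_le_sum_of_subset_of_nonneg (subset_univ _) fun k _ _ => hg k

section Toeplitz

variable {f d : ℕ}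

theorem sum_abs_T1_le (u : Fin (2 * f + 1) → ℝ) (a : Fin d) :
    ∑ b, |T1 f d u a b| ≤ ∑ j, |u j| := by
  simp only [T1, apply_dite abs, abs_zero]
  exact sum_dite_le_of_injective _ (fun b b' _ _ h => by
    have := congrArg Fin.val h
    simp only at this
    omega) fun _ => abs_nonneg _

theorem sum_abs_T2_le (v : Fin (2 * f + 1) → Fin (2 * f + 1) → ℝ) (P : Fin d × Fin d) :
    ∑ Q, |T2 f d v P Q| ≤ ∑ i, ∑ j, |v i j| := by
  rw [Fintype.sum_prod_type]
  calc ∑ s, ∑ t, |T2 f d v P (s, t)|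
      ≤ ∑ s : Fin d, if h : -(f:ℤ) ≤ ((s:ℕ):ℤ) - ((P.1:ℕ):ℤ) ∧ ((s:ℕ):ℤ) - ((P.1:ℕ):ℤ) ≤ (f:ℤ) then
          ∑ j, |v ⟨((f:ℤ) - ((s:ℕ):ℤ) + ((P.1:ℕ):ℤ)).toNat, by omega⟩ j| else 0 := by
        gcongr with s
        simp only [T2]
        split_ifs with h
        · exact sum_abs_T1_le (v ⟨((f:ℤ) - ((s:ℕ):ℤ) + ((P.1:ℕ):ℤ)).toNat, by omega⟩) P.2
        · simp
    _ ≤ ∑ i, ∑ j, |v i j| := by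
        refine sum_dite_le_of_injective (g := fun i => ∑ j, |v i j|) _ (fun s s' _ _ h => ?_)
          fun _ => sum_nonneg fun _ _ => abs_nonneg _
        have := congrArg Fin.val h
        simp only at this
        omega

theorem T1_transpose (u : Fin (2 * f + 1) → ℝ) : (T1 f d u)ᵀ = T1 f d (fun j => u j.rev) := by
  ext a b
  simp only [Matrix.transpose_apply, T1]
  split_ifs with h1 h2 h2
  · congr 1
    ext
    simp only [Fin.val_rev]
    omega
  · omega
  · omega
  · rfl

theorem T2_transpose (v : Fin (2 * f + 1) → Fin (2 * f + 1) → ℝ) :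
    (T2 f d v)ᵀ = T2 f d (fun i j => v i.rev j.rev) := by
  ext P Q
  simp only [Matrix.transpose_apply, T2]
  split_ifs with h1 h2 h2
  · rw [← Matrix.transpose_apply (T1 f d _) P.2 Q.2, T1_transpose]
    congr 2
    funext j
    congr 2
    simp only
    omega
  · omega
  · omega
  · rfl

theorem Tmulti_transpose {cin cout : ℕ}
    (w : Fin cout → Fin cin → Fin (2 * f + 1) → Fin (2 * f + 1) → ℝ) :
    (Tmulti f d cin cout w)ᵀ = Tmulti f d cout cin (fun j i a b => w i j a.rev b.rev) := by
  ext P Q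
  simp only [Matrix.transpose_apply, Tmulti]
  rw [← Matrix.transpose_apply (T2 f d _) P.2 Q.2, T2_transpose]

theorem maxRowSum_Tmulti_le {cin cout : ℕ}
    (w : Fin cout → Fin cin → Fin (2 * f + 1) → Fin (2 * f + 1) → ℝ) :
    maxRowSum (Tmulti f d cin cout w) ≤ ⨆ i, ∑ j, ∑ i', ∑ j', |w i j i' j'| := by
  refine Real.iSup_le (fun P => ?_) (Real.iSup_nonneg fun _ => by positivity)
  calc ∑ Q, |Tmulti f d cin cout w P Q| = ∑ j, ∑ Q', |T2 f d (w P.1 j) P.2 Q'| :=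
        Fintype.sum_prod_type _
    _ ≤ ∑ j, ∑ i', ∑ j', |w P.1 j i' j'| := by
        gcongr with j
        exact sum_abs_T2_le _ _
    _ ≤ ⨆ i, ∑ j, ∑ i', ∑ j', |w i j i' j'| :=
        le_ciSup (f := fun i => ∑ j, ∑ i', ∑ j', |w i j i' j'|) (Finite.bddAbove_range _) P.1

theorem maxColSum_Tmulti_le {cin cout : ℕ}
    (w : Fin cout → Fin cin → Fin (2 * f + 1) → Fin (2 * f + 1) → ℝ) :
    maxColSum (Tmulti f d cin cout w) ≤ ⨆ j, ∑ i, ∑ i', ∑ j', |w i j i' j'| := by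
  calc maxColSum (Tmulti f d cin cout w) = maxRowSum (Tmulti f d cin cout w)ᵀ := rfl
    _ ≤ ⨆ j, ∑ i, ∑ i', ∑ j', |w i j (Fin.revPerm i') (Fin.revPerm j')| := by
        rw [Tmulti_transpose]
        exact maxRowSum_Tmulti_le _
    _ = ⨆ j, ∑ i, ∑ i', ∑ j', |w i j i' j'| := by
        refine iSup_congr fun j => sum_congr rfl fun i _ => ?_
        rw [← Equiv.sum_comp Fin.revPerm fun i' => ∑ j', |w i j i' j'|]
        exact sum_congr rfl fun i' _ =>
          Equiv.sum_comp Fin.revPerm fun j' => |w i j (Fin.revPerm i') j'|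

end Toeplitz

def vectorize {c d : ℕ} (x : Fin c → Fin d → Fin d → ℝ) : Fin c × Fin d × Fin d → ℝ :=
  fun t => x t.1 t.2.1 t.2.2

section Convolution

variable {p : ℝ≥0∞} {f d cin cout : ℕ}

theorem vectorize_convLayer (w : Fin cout → Fin cin → Fin (2 * f + 1) → Fin (2 * f + 1) → ℝ)
    (x : Fin cin → Fin d → Fin d → ℝ) :
    vectorize (convLayer f d cin cout w x) = Tmulti f d cin cout w *ᵥ vectorize x := by
  ext ⟨i, a, b⟩
  simp only [vectorize, convLayer, Matrix.mulVec, dotProduct, Tmulti, Fintype.sum_prod_type]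

theorem Nfactor_nonneg (w : Fin cout → Fin cin → Fin (2 * f + 1) → Fin (2 * f + 1) → ℝ) :
    0 ≤ Nfactor p w := by
  unfold Nfactor
  exact mul_nonneg (Real.rpow_nonneg (Real.iSup_nonneg fun _ => by positivity) _)
    (Real.rpow_nonneg (Real.iSup_nonneg fun _ => by positivity) _)

theorem lpNorm_convLayer_le (hp : 1 ≤ p)
    (w : Fin cout → Fin cin → Fin (2 * f + 1) → Fin (2 * f + 1) → ℝ)
    (x : Fin cin → Fin d → Fin d → ℝ) :
    lpNorm p (vectorize (convLayer f d cin cout w x)) ≤ Nfactor p w * lpNorm p (vectorize x) := by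
  have hexp : (1 / p).toReal ≤ 1 := calc
    (1 / p).toReal ≤ (1 : ℝ≥0∞).toReal :=
      ENNReal.toReal_mono ENNReal.one_ne_top (ENNReal.div_le_of_le_mul (by simpa using hp))
    _ = 1 := ENNReal.toReal_one
  rw [vectorize_convLayer]
  refine (lpNorm_mulVec_le hp _ _).trans (mul_le_mul_of_nonneg_right ?_ (lpNorm_nonneg _))
  exact mul_le_mul (Real.rpow_le_rpow (maxColSum_nonneg _) (maxColSum_Tmulti_le w) (by positivity))
    (Real.rpow_le_rpow (maxRowSum_nonneg _) (maxRowSum_Tmulti_le w) (sub_nonneg.mpr hexp))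
    (Real.rpow_nonneg (maxRowSum_nonneg _) _)
    (Real.rpow_nonneg (Real.iSup_nonneg fun _ => by positivity) _)

theorem lpNorm_convLayer_add_le (hp : 1 ≤ p)
    (w : Fin cout → Fin cin → Fin (2 * f + 1) → Fin (2 * f + 1) → ℝ) (β : Fin cout → ℝ)
    (x : Fin cin → Fin d → Fin d → ℝ) :
    lpNorm p (vectorize fun i a b => convLayer f d cin cout w x i a b + β i)
      ≤ Nfactor p w * lpNorm p (vectorize x) + ((d : ℝ) ^ 2) ^ (1 / p).toReal * lpNorm p β := by
  have hbias := lpNorm_comp_fst_le (κ := Fin d × Fin d) (p := p) β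
  rw [Fintype.card_prod, Fintype.card_fin, Nat.cast_mul, ← sq] at hbias
  exact (lpNorm_add_le hp _ (fun t : Fin cout × Fin d × Fin d => β t.1)).trans
    (add_le_add (lpNorm_convLayer_le hp w x) hbias)

theorem lpNorm_castChan {a b : ℕ} (h : a = b) (x : Fin a → Fin d → Fin d → ℝ) :
    lpNorm p (vectorize (castChan h x)) = lpNorm p (vectorize x) := by
  subst h
  rfl

end Convolution

/-- Closed form of the iteration `u ↦ N k * u + b k` started at `u₀`. -/
def affineIter (N b : ℕ → ℝ) (u₀ : ℝ) (m : ℕ) : ℝ :=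
  (∏ k ∈ range m, N k) * u₀ + ∑ k ∈ range m, (∏ j ∈ Ico (k + 1) m, N j) * b k

theorem affineIter_succ (N b : ℕ → ℝ) (u₀ : ℝ) (m : ℕ) :
    affineIter N b u₀ (m + 1) = N m * affineIter N b u₀ m + b m := by
  have hIco : ∀ k ∈ range m, (∏ j ∈ Ico (k + 1) (m + 1), N j) * b k
      = N m * ((∏ j ∈ Ico (k + 1) m, N j) * b k) := fun k hk => by
    rw [prod_Ico_succ_top (mem_range.mp hk)]
    ring
  rw [affineIter, affineIter, prod_range_succ, sum_range_succ, sum_congr rfl hIco, ← mul_sum,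
    Ico_self, prod_empty]
  ring

theorem le_affineIter {N b u : ℕ → ℝ} {u₀ : ℝ} (hN : ∀ m, 0 ≤ N m) (h₀ : u 0 ≤ u₀)
    (h : ∀ m, u (m + 1) ≤ N m * u m + b m) (m : ℕ) : u m ≤ affineIter N b u₀ m := by
  induction m with
  | zero => simpa [affineIter] using h₀
  | succ m ih =>
    rw [affineIter_succ]
    exact (h m).trans (add_le_add (mul_le_mul_of_nonneg_left ih (hN m)) le_rfl)

section ResidualBlock

variable {p : ℝ≥0∞} {d cres : ℕ} {c f : ℕ → ℕ}
  (w : ∀ m, Fin (c (m + 1)) → Fin (c m) → Fin (2 * f m + 1) → Fin (2 * f m + 1) → ℝ)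
  (β : ∀ m, Fin (c (m + 1)) → ℝ)

theorem lpNorm_convHidden_le (hp : 1 ≤ p) (x : Fin (c 0) → Fin d → Fin d → ℝ) (m : ℕ) :
    lpNorm p (vectorize (convHidden d c f w β m x))
      ≤ affineIter (fun k => Nfactor p (w k))
          (fun k => ((d : ℝ) ^ 2) ^ (1 / p).toReal * lpNorm p (β k))
          (lpNorm p (vectorize x)) m := by
  refine le_affineIter (u := fun m => lpNorm p (vectorize (convHidden d c f w β m x)))
    (fun k => Nfactor_nonneg (w k)) le_rfl (fun k => ?_) m
  refine (lpNorm_mono fun t => ?_).trans (lpNorm_convLayer_add_le hp (w k) (β k) _)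
  show |max _ 0| ≤ |_|
  rw [abs_of_nonneg (le_max_right _ _)]
  exact max_le (le_abs_self _) (abs_nonneg _)

theorem lpNorm_convBlock_sub_le (hp : 1 ≤ p) {Q : ℕ} (hQ : 0 < Q) (hc0 : c 0 = cres)
    (hcq : c Q = cres) (z : Fin cres → Fin d → Fin d → ℝ) (hz : ∀ i a b, 0 ≤ z i a b) :
    lpNorm p (vectorize (convBlock d Q hQ cres c hc0 hcq f w β z) - vectorize z)
      ≤ (∏ m ∈ range Q, Nfactor p (w m)) * lpNorm p (vectorize z)
        + ((d : ℝ) ^ 2) ^ (1 / p).toReal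
          * ∑ m ∈ range Q, (∏ m' ∈ Ico (m + 1) Q, Nfactor p (w m')) * lpNorm p (β m) := by
  have hlast : c (Q - 1 + 1) = cres := (congrArg c (Nat.succ_pred_eq_of_pos hQ)).trans hcq
  set g : Fin (c (Q - 1 + 1)) → Fin d → Fin d → ℝ := fun i a b =>
    convLayer (f (Q - 1)) d (c (Q - 1)) (c (Q - 1 + 1)) (w (Q - 1))
      (convHidden d c f w β (Q - 1) (castChan hc0.symm z)) i a b + β (Q - 1) i
  have hshortcut : ∀ u v : ℝ, 0 ≤ v → |max (u + v) 0 - v| ≤ |u| := fun u v hv => by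
    simpa [max_eq_left hv] using abs_max_sub_max_le_abs (u + v) v 0
  calc lpNorm p (vectorize (convBlock d Q hQ cres c hc0 hcq f w β z) - vectorize z)
      ≤ lpNorm p (vectorize (castChan hlast g)) := by
        refine lpNorm_mono fun ⟨i, a, b⟩ => ?_
        simp only [vectorize, convBlock, castChan, Pi.sub_apply, g, add_right_comm _ (z _ a b)]
        exact hshortcut _ _ (hz i a b)
    _ = lpNorm p (vectorize g) := lpNorm_castChan hlast g
    _ ≤ affineIter (fun k => Nfactor p (w k))
          (fun k => ((d : ℝ) ^ 2) ^ (1 / p).toReal * lpNorm p (β k))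
          (lpNorm p (vectorize z)) (Q - 1 + 1) := by
        rw [affineIter_succ, ← lpNorm_castChan hc0.symm z]
        refine (lpNorm_convLayer_add_le hp _ _ _).trans (add_le_add ?_ le_rfl)
        exact mul_le_mul_of_nonneg_left (lpNorm_convHidden_le w β hp _ _) (Nfactor_nonneg _)
    _ = _ := by
        rw [Nat.sub_add_cancel hQ, affineIter, mul_sum]
        exact congrArg _ (sum_congr rfl fun _ _ => by ring)

end ResidualBlock

section DiscreteGronwall

variable {E : Type*} [SeminormedAddCommGroup E] {y : ℕ → E} {a b : ℕ → ℝ}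

theorem norm_le_of_norm_sub_le (ha : ∀ n, 0 ≤ a n) (hb : ∀ n, 0 ≤ b n)
    (h : ∀ n, ‖y (n + 1) - y n‖ ≤ a n * ‖y n‖ + b n) (n : ℕ) :
    ‖y n‖ ≤ (‖y 0‖ + ∑ k ∈ range n, b k) * Real.exp (∑ k ∈ range n, a k) := by
  induction n with
  | zero => simp
  | succ n ih =>
    set S := ‖y 0‖ + ∑ k ∈ range n, b k
    have hexp : 1 ≤ Real.exp (∑ k ∈ range n, a k) * Real.exp (a n) :=
      one_le_mul_of_one_le_of_one_le (Real.one_le_exp (sum_nonneg fun k _ => ha k))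
        (Real.one_le_exp (ha n))
    calc ‖y (n + 1)‖ ≤ ‖y n‖ + ‖y (n + 1) - y n‖ := norm_le_norm_add_norm_sub' _ _
      _ ≤ (1 + a n) * ‖y n‖ + b n := by linarith [h n]
      _ ≤ Real.exp (a n) * (S * Real.exp (∑ k ∈ range n, a k))
          + b n * (Real.exp (∑ k ∈ range n, a k) * Real.exp (a n)) := by
        gcongr
        · exact (Real.add_one_le_exp _).trans_eq' (add_comm _ _)
        · exact le_mul_of_one_le_right (hb n) hexp
      _ = (‖y 0‖ + ∑ k ∈ range (n + 1), b k) * Real.exp (∑ k ∈ range (n + 1), a k) := by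
        simp only [S, sum_range_succ, Real.exp_add]
        ring

theorem cauchySeq_of_norm_sub_le (ha : ∀ n, 0 ≤ a n) (hb : ∀ n, 0 ≤ b n) (has : Summable a)
    (hbs : Summable b) (h : ∀ n, ‖y (n + 1) - y n‖ ≤ a n * ‖y n‖ + b n) : CauchySeq y := by
  obtain ⟨M, hM⟩ : ∃ M, ∀ n, ‖y n‖ ≤ M := ⟨(‖y 0‖ + ∑' k, b k) * Real.exp (∑' k, a k),
    fun n => (norm_le_of_norm_sub_le ha hb h n).trans (by
    gcongr
    · exact add_nonneg (norm_nonneg _) (tsum_nonneg hb)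
    · exact hbs.sum_le_tsum _ fun k _ => hb k
    · exact has.sum_le_tsum _ fun k _ => ha k)⟩
  refine cauchySeq_of_dist_le_of_summable (fun n => a n * M + b n) (fun n => ?_)
    ((has.mul_right M).add hbs)
  rw [dist_comm, dist_eq_norm]
  exact (h n).trans (add_le_add (mul_le_mul_of_nonneg_left (hM n) (ha n)) le_rfl)

end DiscreteGronwall

theorem stmt7_general
    (d cin cres : ℕ)
    (p : ℝ≥0∞) (hp : 1 ≤ p)
    (q : ℕ → ℕ) (hq : ∀ n, 0 < q n)
    (c : ℕ → ℕ → ℕ) (hc00 : c 0 0 = cin) (h01 : c 0 1 = cres)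
    (hc0 : ∀ n, 0 < n → c n 0 = cres) (hcq : ∀ n, 0 < n → c n (q n) = cres)
    (f : ℕ → ℕ → ℕ)
    (w : ∀ n m, Fin (c n (m+1)) → Fin (c n m) → Fin (2 * f n m + 1) → Fin (2 * f n m + 1) → ℝ)
    (β : ∀ n m, Fin (c n (m+1)) → ℝ)
    (hw : Summable fun n => ∏ m ∈ Finset.range (q n), Nfactor p (w n m))
    (hb : Summable fun n => ∑ m ∈ Finset.range (q n),
      (∏ m' ∈ Finset.Ico (m+1) (q n), Nfactor p (w n m')) * lpNorm p (β n m)) :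
    ∀ x : Fin cin → Fin d → Fin d → ℝ, (∀ i a b, x i a b ∈ Set.Icc (0:ℝ) 1) →
      ∃ y, Tendsto (fun n => convNet d cin cres q hq c hc00 h01 hc0 hcq f w β n x)
        atTop (nhds y) := by
  intro x _
  have : Fact (1 ≤ p) := ⟨hp⟩
  set A := fun n => ∏ m ∈ range (q n), Nfactor p (w n m)
  set B := fun n => ∑ m ∈ range (q n),
    (∏ m' ∈ Ico (m + 1) (q n), Nfactor p (w n m')) * lpNorm p (β n m)
  set K := ((d : ℝ) ^ 2) ^ (1 / p).toReal
  set y := fun n => convNet d cin cres q hq c hc00 h01 hc0 hcq f w β n x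
  have hy : ∀ n i a b, 0 ≤ y n i a b := by
    rintro (_ | n) i a b <;> exact le_max_right _ _
  set z : ℕ → PiLp p (fun _ : Fin cres × Fin d × Fin d => ℝ) :=
    fun n => WithLp.toLp p (vectorize (y n))
  have hstep : ∀ n, ‖z (n + 1) - z n‖ ≤ A (n + 1) * ‖z n‖ + K * B (n + 1) := fun n => by
    have hp0 : p ≠ 0 := (zero_lt_one.trans_le hp).ne'
    rw [← WithLp.toLp_sub, ← lpNorm_eq_norm_toLp hp0, ← lpNorm_eq_norm_toLp hp0]
    exact lpNorm_convBlock_sub_le (w (n + 1)) (β (n + 1)) hp (hq (n + 1))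
      (hc0 (n + 1) n.succ_pos) (hcq (n + 1) n.succ_pos) (y n) (hy n)
  have hA : Summable fun n => A (n + 1) := (summable_nat_add_iff 1).mpr hw
  have hB : Summable fun n => K * B (n + 1) := ((summable_nat_add_iff 1).mpr hb).mul_left K
  have hA0 : ∀ n, 0 ≤ A (n + 1) := fun n => prod_nonneg fun m _ => Nfactor_nonneg (w (n + 1) m)
  have hB0 : ∀ n, 0 ≤ K * B (n + 1) := fun n => mul_nonneg (by positivity) (sum_nonneg fun m _ =>
      mul_nonneg (prod_nonneg fun m' _ => Nfactor_nonneg _) (lpNorm_nonneg _))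
  obtain ⟨L, hL⟩ := cauchySeq_tendsto_of_complete (cauchySeq_of_norm_sub_le hA0 hB0 hA hB hstep)
  have hcont : Continuous fun v : PiLp p (fun _ : Fin cres × Fin d × Fin d => ℝ) =>
      fun i a b => v (i, a, b) := by fun_prop
  exact ⟨_, (hcont.tendsto L).comp hL⟩

theorem stmt7
    (d cin cres : ℕ) (hd : 0 < d) (hcin : 0 < cin) (hcres : 0 < cres)
    (p : ℝ≥0∞) (hp : 1 ≤ p)
    (q : ℕ → ℕ) (hq : ∀ n, 0 < q n) (hq0 : q 0 = 1) (hqb : ∃ Q, ∀ n, q n ≤ Q)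
    (c : ℕ → ℕ → ℕ) (hc00 : c 0 0 = cin) (h01 : c 0 1 = cres)
    (hc0 : ∀ n, 0 < n → c n 0 = cres) (hcq : ∀ n, 0 < n → c n (q n) = cres)
    (hcpos : ∀ n m, m ≤ q n → 0 < c n m) (hcb : ∃ C, ∀ n m, m ≤ q n → c n m ≤ C)
    (hcinle : ∀ n m, m ≤ q n → cin ≤ c n m)
    (f : ℕ → ℕ → ℕ) (hf : ∀ n m, m < q n → 0 < f n m)
    (hfb : ∃ Fb, ∀ n m, m < q n → f n m ≤ Fb)
    (hfd : ∀ n m, m < q n → f n m + 1 ≤ d)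
    (w : ∀ n m, Fin (c n (m+1)) → Fin (c n m) → Fin (2 * f n m + 1) → Fin (2 * f n m + 1) → ℝ)
    (β : ∀ n m, Fin (c n (m+1)) → ℝ)
    (hw : Summable fun n => ∏ m ∈ Finset.range (q n), Nfactor p (w n m))
    (hb : Summable fun n => ∑ m ∈ Finset.range (q n),
      (∏ m' ∈ Finset.Ico (m+1) (q n), Nfactor p (w n m')) * lpNorm p (β n m)) :
    ∀ x : Fin cin → Fin d → Fin d → ℝ, (∀ i a b, x i a b ∈ Set.Icc (0:ℝ) 1) →
      ∃ y, Tendsto (fun n => convNet d cin cres q hq c hc00 h01 hc0 hcq f w β n x)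
        atTop (nhds y) :=
  stmt7_general d cin cres p hp q hq c hc00 h01 hc0 hcq f w β hw hb
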